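/- For ℓ > 1 and g ∈ S_m, the number of ℓ-cycles γ ∈ S_m (as permutations with one nontrivial cycle of length ℓ) that commute with g equals ∑_{d·e = ℓ} φ(d)·(dᵉ/ℓ)·X_d(g)(X_d(g)−1)⋯(X_d(g)−e+1). -/

import Mathlib

/-- `cyc g i` is the number of `i`-cycles in the disjoint cycle decomposition of `g`
(fixed points count as `1`-cycles). -/
def cyc {m : ℕ} (g : Equiv.Perm (Fin m)) (i : ℕ) : ℕ :=
  if i = 1 then (Finset.univ.filter fun x => g x = x).card
  else Multiset.count i g.cycleType

/-!
Marking a point `x` of the support of an `ℓ`-cycle `γ` turns `γ` into the embedding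
`f : ZMod ℓ ↪ Fin m`, `f i = γ ^ i x`, and each `γ` arises from exactly `ℓ` such embeddings.
`γ` commutes with `g` iff `g ∘ f = f ∘ (· + k)` for some (unique) `k : ZMod ℓ`. If `k` has
additive order `d` and `ℓ = d * e`, then `ZMod ℓ` with the shift by `k` is `e` copies of
`ZMod d` with the shift by `1`, so such an `f` is the choice of `e` points of period `d` under
`g` lying in pairwise distinct cycles of `g`: there are `d ^ e * X_d (X_d - 1) ⋯ (X_d - e + 1)`
choices. Finally, `ZMod ℓ` has `φ d` elements of order `d` for each `d ∣ ℓ`.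
-/

open Equiv Equiv.Perm Finset Function MulAction

section GroupAction

variable {G α : Type*} [Group G] [MulAction G α] {g : G} {x : α} {d : ℕ}

theorem pow_smul_eq_pow_smul_iff_modEq {a b : ℕ} :
    g ^ a • x = g ^ b • x ↔ a ≡ b [MOD period g x] := by
  rw [Nat.modEq_iff_dvd, ← zpow_smul_eq_iff_period_dvd, sub_eq_neg_add, zpow_add, mul_smul,
    zpow_neg, inv_smul_eq_iff, zpow_natCast, zpow_natCast, eq_comm]

theorem period_eq_of_forall_pow_smul_eq_iff (h : ∀ n : ℕ, g ^ n • x = x ↔ d ∣ n) :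
    period g x = d :=
  Nat.dvd_antisymm (pow_smul_eq_iff_period_dvd.1 ((h d).2 dvd_rfl))
    ((h _).1 (pow_period_smul g x))

theorem pow_val_natCast_smul (hd : period g x = d) (n : ℕ) :
    g ^ (n : ZMod d).val • x = g ^ n • x := by
  rw [ZMod.val_natCast, ← hd, pow_mod_period_smul]

theorem injective_pow_val_smul [NeZero d] (hd : period g x = d) :
    Injective fun j : ZMod d => g ^ j.val • x := by
  intro i j hij
  have := (ZMod.natCast_eq_natCast_iff _ _ d).2 (hd ▸ pow_smul_eq_pow_smul_iff_modEq.1 hij)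
  simpa using this

end GroupAction

section Period

variable {α : Type*} [Fintype α] [DecidableEq α]

theorem card_sameCycle (g : Perm α) (x : α) : #{y | g.SameCycle x y} = period g x := by
  have hpos := period_pos_of_orderOf_pos (orderOf_pos g) x
  have : ({y | g.SameCycle x y} : Finset α) = (range (period g x)).image fun n => (g ^ n) x := by
    ext y
    simp only [mem_filter, mem_univ, true_and, mem_image, mem_range]
    constructor
    · intro hxy
      obtain ⟨n, rfl⟩ := hxy.exists_nat_pow_eq
      exact ⟨n % period g x, Nat.mod_lt _ hpos, pow_mod_period_smul (m := g) (a := x) n⟩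
    · rintro ⟨n, -, rfl⟩
      exact ⟨n, by simp⟩
  rw [this, card_image_of_injOn, card_range]
  intro a ha b hb hab
  exact Nat.ModEq.eq_of_lt_of_lt ((pow_smul_eq_pow_smul_iff_modEq (g := g) (x := x)).1 hab)
    (mem_range.1 ha) (mem_range.1 hb)

theorem Equiv.Perm.SameCycle.period_eq {g : Perm α} {x y : α} (h : g.SameCycle x y) :
    period g x = period g y := by
  rw [← card_sameCycle, ← card_sameCycle]
  congr 1
  ext z
  simp only [mem_filter, mem_univ, true_and]
  exact ⟨h.symm.trans, h.trans⟩

theorem card_sameCycle_of_period_eq (g : Perm α) {d : ℕ} (x : {x : α // period g x = d}) :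
    #{y : {x : α // period g x = d} | g.SameCycle y x} = d := by
  refine Eq.trans ?_ ((card_sameCycle g x).trans x.2)
  rw [← Fintype.card_subtype, ← Fintype.card_subtype]
  exact Fintype.card_congr ((subtypeSubtypeEquivSubtypeInter (fun y => period g y = d)
    (fun y => g.SameCycle y x)).trans (subtypeEquivRight fun y =>
      ⟨fun h => h.2.symm, fun h => ⟨h.period_eq.symm.trans x.2, h.symm⟩⟩))

theorem period_eq_card_support_cycleOf (g : Perm α) {x : α} (hx : g x ≠ x) :
    period g x = #(g.cycleOf x).support := by
  rw [← card_sameCycle]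
  congr 1
  ext y
  simp [mem_support_cycleOf_iff' hx]

theorem Equiv.Perm.IsCycle.period_eq {γ : Perm α} (hγ : γ.IsCycle) {x : α}
    (hx : x ∈ γ.support) : period γ x = #γ.support := by
  rw [period_eq_card_support_cycleOf γ (mem_support.1 hx), hγ.cycleOf_eq (mem_support.1 hx)]

end Period

theorem card_filter_period_eq {m : ℕ} (g : Perm (Fin m)) (d : ℕ) :
    #{x : Fin m | period g x = d} = d * cyc g d := by
  rcases eq_or_ne d 1 with rfl | hd
  · simp [cyc, period_eq_one_iff]
  have : ({x : Fin m | period g x = d} : Finset (Fin m)) =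
      {c ∈ g.cycleFactorsFinset | #c.support = d}.biUnion support := by
    ext x
    simp only [mem_filter, mem_univ, true_and, mem_biUnion]
    constructor
    · intro hx
      have hgx : g x ≠ x := fun h => hd (hx ▸ period_eq_one_iff.2 h)
      refine ⟨g.cycleOf x,
        ⟨cycleOf_mem_cycleFactorsFinset_iff.2 (mem_support.2 hgx), ?_⟩, ?_⟩
      · rw [← period_eq_card_support_cycleOf g hgx, hx]
      · exact (mem_support_cycleOf_iff' hgx).2 (SameCycle.refl _ _)
    · rintro ⟨c, ⟨hc, rfl⟩, hxc⟩
      have hgx : g x ≠ x := mem_support.1 (mem_cycleFactorsFinset_support_le hc hxc)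
      rw [period_eq_card_support_cycleOf g hgx, cycle_is_cycleOf hxc hc]
  rw [this, card_biUnion, sum_congr rfl fun c hc => (mem_filter.1 hc).2, sum_const, smul_eq_mul,
    mul_comm, cyc, if_neg hd, CycleType.count_def, Fintype.card_subtype]
  · rw [univ_eq_attach, filter_attach (fun c : Perm (Fin m) => #c.support = d), card_map,
      card_attach]
  · exact fun c hc c' hc' hne => (g.cycleFactorsFinset_pairwise_disjoint (mem_filter.1 hc).1
      (mem_filter.1 hc').1 hne).disjoint_support

section Tuples

variable {α β : Type*} {π : α → β}

theorem injective_comp_cons_iff {e : ℕ} (x : α) (c : Fin e → α) :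
    Injective (π ∘ (Fin.cons x c : Fin (e + 1) → α)) ↔
      Injective (π ∘ c) ∧ ∀ r, π x ≠ π (c r) := by
  rw [Fin.comp_cons, Fin.cons_injective_iff, and_comm]
  simp [Set.mem_range, eq_comm]

variable [Fintype α] [DecidableEq β] {d n : ℕ}
  (hα : Fintype.card α = d * n) (hfib : ∀ x, #{y | π y = π x} = d)
include hα hfib

theorem card_filter_forall_ne_comp {e : ℕ} {c : Fin e → α} (hc : Injective (π ∘ c)) :
    #{x | ∀ r, π x ≠ π (c r)} = d * (n - e) := by
  have hmaps : Set.MapsTo π (({x | ∃ r, π x = π (c r)} : Finset α) : Set α)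
      (univ.image (π ∘ c)) := fun x hx => by
    obtain ⟨r, hr⟩ := (mem_filter.1 hx).2
    exact mem_image.2 ⟨r, mem_univ _, hr.symm⟩
  have hhit : #{x | ∃ r, π x = π (c r)} = e * d := by
    rw [card_eq_sum_card_fiberwise hmaps, sum_image fun r _ s _ h => hc h,
      sum_congr rfl fun r _ => ?_, sum_const, card_univ, Fintype.card_fin, smul_eq_mul]
    rw [filter_filter, ← hfib (c r)]
    exact congrArg card (filter_congr fun x _ => and_iff_right_of_imp fun h => ⟨r, h⟩)
  have := card_filter_add_card_filter_not (s := univ) (fun x => ∃ r, π x = π (c r))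
  simp only [not_exists, ← ne_eq, card_univ] at this
  rw [Nat.mul_sub, ← hα, mul_comm d e, ← hhit, ← this]
  omega

theorem card_injective_comp (e : ℕ) :
    Nat.card {c : Fin e → α // Injective (π ∘ c)} = d ^ e * n.descFactorial e := by
  classical
  induction e with
  | zero =>
    exact Nat.card_eq_one_iff_exists.2
      ⟨⟨finZeroElim, injective_of_subsingleton _⟩,
        fun c => Subtype.ext (Subsingleton.elim _ _)⟩
  | succ e ih =>
    let E : {c : Fin (e + 1) → α // Injective (π ∘ c)} ≃
        Σ c : {c : Fin e → α // Injective (π ∘ c)}, {x // ∀ r, π x ≠ π (c.1 r)} :=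
      { toFun c :=
          have h := (injective_comp_cons_iff (c.1 0) (Fin.tail c.1)).1
            (by simpa only [Fin.cons_self_tail] using c.2)
          ⟨⟨Fin.tail c.1, h.1⟩, ⟨c.1 0, h.2⟩⟩
        invFun p := ⟨Fin.cons p.2.1 p.1.1, (injective_comp_cons_iff _ _).2 ⟨p.1.2, p.2.2⟩⟩
        left_inv c := by simp
        right_inv p :=
          Sigma.subtype_ext (Subtype.ext (Fin.tail_cons (α := fun _ => α) p.2.1 p.1.1)) rfl }
    rw [Nat.card_congr E, Nat.card_sigma]
    simp only [Nat.card_eq_fintype_card, Fintype.card_subtype]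
    rw [sum_congr rfl fun c _ => card_filter_forall_ne_comp hα hfib c.2, sum_const, card_univ,
      ← Nat.card_eq_fintype_card, ih, smul_eq_mul, Nat.descFactorial_succ]
    ring

end Tuples

theorem card_semiconj_embedding_congr {α β γ : Type*} (ψ : β ≃ γ) {σ : β → β}
    {τ : γ → γ} (hψ : Semiconj ψ σ τ) (g : α → α) :
    Nat.card {f : γ ↪ α // Semiconj f τ g} = Nat.card {f : β ↪ α // Semiconj f σ g} :=
  Nat.card_congr
    { toFun f := ⟨ψ.toEmbedding.trans f.1, f.2.comp_left hψ⟩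
      invFun f := ⟨ψ.symm.toEmbedding.trans f.1,
        f.2.comp_left (hψ.inverse_left ψ.left_inv ψ.right_inv)⟩
      left_inv f := by ext; simp
      right_inv f := by ext; simp }

section Slices

variable {α ι : Type*} {g : Perm α} {d : ℕ} {f : ι × ZMod d → α}

theorem Function.Semiconj.apply_add_natCast (hf : Semiconj f (Prod.map id (· + 1)) g) (r : ι)
    (j : ZMod d) : ∀ n : ℕ, f (r, j + n) = (g ^ n) (f (r, j))
  | 0 => by simp
  | n + 1 => by
    rw [Nat.cast_succ, ← add_assoc, pow_succ', Perm.mul_apply, ← hf.apply_add_natCast r j n]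
    exact hf (r, j + n)

theorem Function.Semiconj.apply_eq_pow_val [NeZero d] (hf : Semiconj f (Prod.map id (· + 1)) g)
    (r : ι) (j : ZMod d) : f (r, j) = (g ^ j.val) (f (r, 0)) := by
  rw [← hf.apply_add_natCast, zero_add, ZMod.natCast_zmod_val]

theorem Function.Semiconj.period_apply_zero [NeZero d]
    (hf : Semiconj f (Prod.map id (· + 1)) g) (hinj : Injective f) (r : ι) :
    period g (f (r, 0)) = d := by
  refine period_eq_of_forall_pow_smul_eq_iff fun n => ?_
  have h := hf.apply_add_natCast r 0 n
  rw [zero_add] at h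
  rw [← ZMod.natCast_eq_zero_iff, Perm.smul_def, ← h, hinj.eq_iff, Prod.mk.injEq]
  exact and_iff_right rfl

theorem Function.Semiconj.eq_of_sameCycle [Finite α] (hf : Semiconj f (Prod.map id (· + 1)) g)
    (hinj : Injective f) {r s : ι} (hrs : g.SameCycle (f (r, 0)) (f (s, 0))) : r = s := by
  obtain ⟨n, hn⟩ := hrs.exists_nat_pow_eq
  rw [← hf.apply_add_natCast, zero_add] at hn
  exact congrArg Prod.fst (hinj hn)

variable (g d) [NeZero d]

theorem injective_pow_val_apply {c : ι → {x : α // period g x = d}}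
    (hc : Injective (Quotient.mk (SameCycle.setoid g) ∘ Subtype.val ∘ c)) :
    Injective fun p : ι × ZMod d => (g ^ p.2.val) (c p.1) := by
  rintro ⟨r, i⟩ ⟨s, j⟩ h
  have hcyc : g.SameCycle ((g ^ i.val) (c r)) ((g ^ j.val) (c s)) := by
    simp only at h
    rw [h]
  rw [sameCycle_pow_left, sameCycle_pow_right] at hcyc
  obtain rfl : r = s := hc (Quotient.sound hcyc)
  exact Prod.ext rfl (injective_pow_val_smul (c r).2 h)

def semiconjEmbeddingEquiv [Finite α] :
    {f : ι × ZMod d ↪ α // Semiconj f (Prod.map id (· + 1)) g} ≃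
      {c : ι → {x : α // period g x = d} //
        Injective (Quotient.mk (SameCycle.setoid g) ∘ Subtype.val ∘ c)} where
  toFun f := ⟨fun r => ⟨f.1 (r, 0), f.2.period_apply_zero f.1.injective r⟩,
    fun _ _ h => f.2.eq_of_sameCycle f.1.injective (Quotient.eq.1 h)⟩
  invFun c := ⟨⟨_, injective_pow_val_apply g d c.2⟩, fun ⟨r, j⟩ => by
    have : j + 1 = ((j.val + 1 : ℕ) : ZMod d) := by simp
    simp only [Embedding.coeFn_mk, Prod.map_apply, id_eq]
    rw [this, ← Perm.mul_apply, ← pow_succ']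
    exact pow_val_natCast_smul (c.1 r).2 _⟩
  left_inv f := Subtype.ext <| Embedding.ext fun ⟨r, j⟩ => (f.2.apply_eq_pow_val r j).symm
  right_inv c := by ext; simp

end Slices

theorem val_natCast_nsmul {A : Type*} [AddMonoid A] {k : A} {d : ℕ} (hk : addOrderOf k = d)
    (n : ℕ) : (n : ZMod d).val • k = n • k := by
  rw [ZMod.val_natCast, ← hk, mod_addOrderOf_nsmul]

section Transversal

variable {ℓ d e : ℕ} [NeZero ℓ] {k : ZMod ℓ} (hk : addOrderOf k = d) (hde : d * e = ℓ)
include hk hde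

theorem dvd_val_of_addOrderOf_eq : e ∣ k.val := by
  have hd : 0 < d := hk ▸ addOrderOf_pos k
  have h : ((d * k.val : ℕ) : ZMod ℓ) = 0 := by
    rw [Nat.cast_mul, ZMod.natCast_zmod_val, ← nsmul_eq_mul, ← hk, addOrderOf_nsmul_eq_zero]
  rw [ZMod.natCast_eq_zero_iff] at h
  exact Nat.dvd_of_mul_dvd_mul_left hd (hde ▸ h)

theorem injective_natCast_add_val_nsmul :
    Injective fun p : Fin e × ZMod d => (p.1 : ZMod ℓ) + p.2.val • k := by
  have : NeZero d := ⟨hk ▸ (addOrderOf_pos k).ne'⟩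
  rintro ⟨r, i⟩ ⟨s, j⟩ h
  simp only at h
  have hrs : r = s := by
    have hcast := congrArg (ZMod.castHom (Dvd.intro_left d hde) (ZMod e)) h
    have hk0 : ZMod.castHom (Dvd.intro_left d hde) (ZMod e) k = 0 := by
      rw [ZMod.castHom_apply, ZMod.cast_eq_val, ZMod.natCast_eq_zero_iff]
      exact dvd_val_of_addOrderOf_eq hk hde
    simp only [map_add, map_nsmul, map_natCast, hk0, nsmul_zero, add_zero,
      ZMod.natCast_eq_natCast_iff'] at hcast
    exact Fin.ext (by simpa [Nat.mod_eq_of_lt r.isLt, Nat.mod_eq_of_lt s.isLt] using hcast)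
  subst hrs
  have := (ZMod.natCast_eq_natCast_iff _ _ d).2
    (hk ▸ nsmul_eq_nsmul_iff_modEq.1 (add_left_cancel h))
  exact Prod.ext rfl (by simpa using this)

/-- `(r, j) ↦ r + j • k`: the decomposition of `ZMod ℓ` into the cosets `r + ⟨k⟩`,
`r < e`. -/
noncomputable def finProdZModEquiv : Fin e × ZMod d ≃ ZMod ℓ :=
  haveI : NeZero d := ⟨hk ▸ (addOrderOf_pos k).ne'⟩
  Equiv.ofBijective _ <| (Fintype.bijective_iff_injective_and_card _).2
    ⟨injective_natCast_add_val_nsmul hk hde, by simp [← hde, mul_comm]⟩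

theorem semiconj_finProdZModEquiv :
    Semiconj (finProdZModEquiv hk hde) (Prod.map id (· + 1)) (· + k) := by
  have : NeZero d := ⟨hk ▸ (addOrderOf_pos k).ne'⟩
  rintro ⟨r, j⟩
  have : j + 1 = ((j.val + 1 : ℕ) : ZMod d) := by simp
  simp only [finProdZModEquiv, Equiv.ofBijective_apply, Prod.map_apply, id_eq]
  rw [this, val_natCast_nsmul hk, succ_nsmul, add_assoc]

theorem card_semiconj_addRight {m : ℕ} (g : Perm (Fin m)) :
    Nat.card {f : ZMod ℓ ↪ Fin m // Semiconj f (· + k) g} =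
      d ^ e * (cyc g d).descFactorial e := by
  classical
  have : NeZero d := ⟨hk ▸ (addOrderOf_pos k).ne'⟩
  rw [card_semiconj_embedding_congr _ (semiconj_finProdZModEquiv hk hde),
    Nat.card_congr (semiconjEmbeddingEquiv g d)]
  refine card_injective_comp (α := {x : Fin m // period g x = d})
    (π := Quotient.mk (SameCycle.setoid g) ∘ Subtype.val) ?_ (fun x => ?_) e
  · rw [Fintype.card_subtype, card_filter_period_eq]
  · simp only [comp_apply, Quotient.eq]
    convert card_sameCycle_of_period_eq g x using 3
    exact Iff.rfl

end Transversal

section CycleOfEmbedding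

variable {α : Type*} [DecidableEq α] {ℓ : ℕ} [NeZero ℓ] (f : ZMod ℓ ↪ α)

noncomputable def cycleOfEmbedding : Perm α :=
  (Equiv.addRight 1).extendDomain (Equiv.ofInjective f f.injective)

theorem cycleOfEmbedding_apply (i : ZMod ℓ) : cycleOfEmbedding f (f i) = f (i + 1) :=
  extendDomain_apply_image _ (Equiv.ofInjective f f.injective) i

theorem cycleOfEmbedding_apply_of_notMem {y : α} (hy : y ∉ Set.range f) :
    cycleOfEmbedding f y = y :=
  extendDomain_apply_not_subtype _ _ hy

theorem cycleOfEmbedding_pow_apply (n : ℕ) (i : ZMod ℓ) :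
    (cycleOfEmbedding f ^ n) (f i) = f (i + n) := by
  induction n with
  | zero => simp
  | succ n ih =>
    rw [pow_succ', Perm.mul_apply, ih, cycleOfEmbedding_apply, Nat.cast_succ, add_assoc]

end CycleOfEmbedding

section

variable {α : Type*} [DecidableEq α] {ℓ : ℕ} [Fact (1 < ℓ)] (f : ZMod ℓ ↪ α)

theorem isCycle_cycleOfEmbedding : (cycleOfEmbedding f).IsCycle :=
  IsCycle.extendDomain _ ⟨0, by simp, fun y _ => ⟨y.val, by simp⟩⟩

variable [Fintype α]

theorem card_support_cycleOfEmbedding : #(cycleOfEmbedding f).support = ℓ := by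
  have : (Equiv.addRight (1 : ZMod ℓ)).support = univ := by ext; simp
  rw [cycleOfEmbedding, support_extend_domain, card_map, this, card_univ, ZMod.card]

theorem apply_zero_mem_support_cycleOfEmbedding : f 0 ∈ (cycleOfEmbedding f).support := by
  simp [cycleOfEmbedding_apply]

end

section EmbeddingOfCycle

variable {α : Type*} [Fintype α] [DecidableEq α] {ℓ : ℕ} [NeZero ℓ] {γ : Perm α}
  (hγ : γ.IsCycle) (hcard : #γ.support = ℓ) {x : α} (hx : x ∈ γ.support)
include hγ hcard hx

def embeddingOfCycle : ZMod ℓ ↪ α :=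
  ⟨fun i => (γ ^ i.val) x, injective_pow_val_smul (hcard ▸ hγ.period_eq hx)⟩

theorem embeddingOfCycle_natCast (n : ℕ) : embeddingOfCycle hγ hcard hx n = (γ ^ n) x :=
  pow_val_natCast_smul (hcard ▸ hγ.period_eq hx) n

theorem cycleOfEmbedding_embeddingOfCycle :
    cycleOfEmbedding (embeddingOfCycle hγ hcard hx) = γ := by
  ext y
  by_cases hy : y ∈ Set.range (embeddingOfCycle hγ hcard hx)
  · obtain ⟨i, rfl⟩ := hy
    rw [cycleOfEmbedding_apply, ← ZMod.natCast_zmod_val i, ← Nat.cast_succ,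
      embeddingOfCycle_natCast, embeddingOfCycle_natCast, pow_succ', Perm.mul_apply]
  · rw [cycleOfEmbedding_apply_of_notMem _ hy, eq_comm, ← Perm.notMem_support]
    intro hyγ
    obtain ⟨n, rfl⟩ := (hγ.sameCycle (mem_support.1 hx) (mem_support.1 hyγ)).exists_nat_pow_eq
    exact hy ⟨n, embeddingOfCycle_natCast hγ hcard hx n⟩

end EmbeddingOfCycle

section Pointed

variable {α : Type*} [Fintype α] [DecidableEq α] {ℓ : ℕ}

theorem card_sigma_support (P : Perm α → Prop) :
    Nat.card (Σ γ : {γ : Perm α // γ.IsCycle ∧ #γ.support = ℓ ∧ P γ}, γ.1.support) =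
      ℓ * Nat.card {γ : Perm α // γ.IsCycle ∧ #γ.support = ℓ ∧ P γ} := by
  classical
  rw [Nat.card_sigma, sum_congr rfl fun γ _ => (Nat.card_eq_finsetCard _).trans γ.2.2.1,
    sum_const, card_univ, smul_eq_mul, mul_comm, Nat.card_eq_fintype_card]

variable [Fact (1 < ℓ)]

noncomputable def embeddingEquivSigmaSupport (P : Perm α → Prop) :
    {f : ZMod ℓ ↪ α // P (cycleOfEmbedding f)} ≃
      Σ γ : {γ : Perm α // γ.IsCycle ∧ #γ.support = ℓ ∧ P γ}, γ.1.support where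
  toFun f := ⟨⟨cycleOfEmbedding f.1, isCycle_cycleOfEmbedding f.1,
      card_support_cycleOfEmbedding f.1, f.2⟩,
    ⟨f.1 0, apply_zero_mem_support_cycleOfEmbedding f.1⟩⟩
  invFun p := ⟨embeddingOfCycle p.1.2.1 p.1.2.2.1 p.2.2, by
    rw [cycleOfEmbedding_embeddingOfCycle]; exact p.1.2.2.2⟩
  left_inv f := Subtype.ext <| Embedding.ext fun i => by
    simp [embeddingOfCycle, cycleOfEmbedding_pow_apply]
  right_inv p := Sigma.subtype_ext
    (Subtype.ext (cycleOfEmbedding_embeddingOfCycle p.1.2.1 p.1.2.2.1 p.2.2))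
    (by simp [embeddingOfCycle])

end Pointed

theorem Function.Semiconj.addRight_unique {α : Type*} {ℓ : ℕ} {f : ZMod ℓ ↪ α}
    {g : α → α} {k k' : ZMod ℓ} (h : Semiconj f (· + k) g) (h' : Semiconj f (· + k') g) :
    k = k' := by
  simpa using f.injective ((h 0).trans (h' 0).symm)

theorem commute_cycleOfEmbedding_iff {α : Type*} [DecidableEq α] {ℓ : ℕ} [Fact (1 < ℓ)]
    (f : ZMod ℓ ↪ α) (g : Perm α) :
    Commute (cycleOfEmbedding f) g ↔ ∃ k, Semiconj f (· + k) g := by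
  constructor
  · intro h
    have hgf : g (f 0) ∈ Set.range f := by
      by_contra hne
      have h01 := (Perm.ext_iff.1 h (f 0)).symm
      rw [Perm.mul_apply, Perm.mul_apply, cycleOfEmbedding_apply_of_notMem f hne,
        cycleOfEmbedding_apply, zero_add, g.injective.eq_iff, f.injective.eq_iff] at h01
      exact one_ne_zero h01
    obtain ⟨k, hk⟩ := hgf
    refine ⟨k, fun i => ?_⟩
    have hcomm := Perm.ext_iff.1 (h.pow_left i.val).eq (f 0)
    rw [Perm.mul_apply, Perm.mul_apply, ← hk, cycleOfEmbedding_pow_apply,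
      cycleOfEmbedding_pow_apply, ZMod.natCast_zmod_val, zero_add] at hcomm
    show f (i + k) = g (f i)
    rw [add_comm, hcomm]
  · rintro ⟨k, hk⟩
    refine Perm.ext fun y => ?_
    simp only [Perm.mul_apply]
    by_cases hy : y ∈ Set.range f
    · obtain ⟨i, rfl⟩ := hy
      rw [← hk, cycleOfEmbedding_apply, cycleOfEmbedding_apply, ← hk, add_right_comm]
    · have hgy : g y ∉ Set.range f := by
        rintro ⟨i, hi⟩
        exact hy ⟨i - k, g.injective (by rw [← hk, ← hi]; simp)⟩
      rw [cycleOfEmbedding_apply_of_notMem f hy, cycleOfEmbedding_apply_of_notMem f hgy]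

theorem card_sigma_eq_card_exists {ι β : Type*} {P : ι → β → Prop}
    (h : ∀ b i j, P i b → P j b → i = j) :
    Nat.card (Σ i, {b // P i b}) = Nat.card {b // ∃ i, P i b} := by
  refine Nat.card_congr (Equiv.ofBijective (fun p => ⟨p.2.1, p.1, p.2.2⟩) ⟨?_, ?_⟩)
  · rintro ⟨i, b, hb⟩ ⟨j, b', hb'⟩ hij
    obtain rfl : b = b' := congrArg Subtype.val hij
    obtain rfl := h b i j hb hb'
    rfl
  · rintro ⟨b, i, hb⟩
    exact ⟨⟨i, b, hb⟩, rfl⟩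

theorem sum_addOrderOf {G M : Type*} [AddGroup G] [Fintype G] [IsAddCyclic G] [AddCommMonoid M]
    (h : ℕ → M) :
    ∑ k : G, h (addOrderOf k) = ∑ d ∈ (Fintype.card G).divisors, d.totient • h d := by
  classical
  rw [← sum_fiberwise_of_maps_to (t := (Fintype.card G).divisors) (g := addOrderOf) fun k _ =>
    Nat.mem_divisors.2 ⟨addOrderOf_dvd_card, Fintype.card_ne_zero⟩]
  refine sum_congr rfl fun d hd => ?_
  rw [sum_congr rfl fun k hk => congrArg h (mem_filter.1 hk).2, sum_const,
    IsAddCyclic.card_addOrderOf_eq_totient (Nat.dvd_of_mem_divisors hd)]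

/-- For `ℓ > 1`, the number of `ℓ`-cycles in `S_m` (permutations with a single
nontrivial cycle, of length `ℓ`) commuting with `g` is
`∑_{d·e = ℓ} φ(d) (dᵉ/ℓ) X_d(g)(X_d(g)−1)⋯(X_d(g)−e+1)`. -/
theorem card_commuting_cycles (ℓ m : ℕ) (hℓ : 1 < ℓ) (g : Equiv.Perm (Fin m)) :
    ℓ * Nat.card {γ : Equiv.Perm (Fin m) // γ.IsCycle ∧ γ.support.card = ℓ ∧ Commute γ g} =
      ∑ d ∈ ℓ.divisors, Nat.totient d * d ^ (ℓ / d) * Nat.descFactorial (cyc g d) (ℓ / d) := by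
  have : Fact (1 < ℓ) := ⟨hℓ⟩
  have hdvd (k : ZMod ℓ) : addOrderOf k ∣ ℓ := by simpa using addOrderOf_dvd_card (x := k)
  calc _ = Nat.card {f : ZMod ℓ ↪ Fin m // ∃ k, Semiconj f (· + k) g} := by
        rw [← card_sigma_support, ← Nat.card_congr (embeddingEquivSigmaSupport _)]
        exact Nat.card_congr (subtypeEquivRight fun f => commute_cycleOfEmbedding_iff f g)
    _ = ∑ k : ZMod ℓ, addOrderOf k ^ (ℓ / addOrderOf k) *
          (cyc g (addOrderOf k)).descFactorial (ℓ / addOrderOf k) := by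
        rw [← card_sigma_eq_card_exists
          (P := fun k (f : ZMod ℓ ↪ Fin m) => Semiconj f (· + k) g)
          fun _ _ _ => Semiconj.addRight_unique, Nat.card_sigma]
        exact sum_congr rfl fun k _ =>
          card_semiconj_addRight rfl (Nat.mul_div_cancel' (hdvd k)) g
    _ = _ := by
        rw [sum_addOrderOf fun d => d ^ (ℓ / d) * (cyc g d).descFactorial (ℓ / d), ZMod.card]
        simp only [smul_eq_mul, mul_assoc]
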